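/- arXiv:1501.04398 — 3 statements merged into one kernel-verified Lean document; each statement's English description precedes it below -/
import Mathlib

section
/- For every vertex u of a connected finite simple graph X, the eccentricity of u is at most the dual degree of u, i.e., ε_u ≤ d*(u) = |Φ_u| − 1. -/
open Matrix Finset Polynomial

variable {V : Type*}

/-- The eccentricity of a vertex: maximum graph distance to any vertex. -/
noncomputable def ecc [Fintype V] (X : SimpleGraph V) (u : V) : ℕ :=
  Finset.univ.sup fun w => X.dist u w

/-- The standard basis vector of a vertex. -/
def eVec [DecidableEq V] (u : V) : V → ℝ := Pi.single u 1

/-- `SpectralDecomp X d θ E` : `θ 0 > θ 1 > ... > θ d` are the distinct eigenvalues of the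
adjacency matrix of `X` and `E r` is the orthogonal projection onto the `θ r`-eigenspace. -/
structure SpectralDecomp [Fintype V] [DecidableEq V] (X : SimpleGraph V) [DecidableRel X.Adj]
    (d : ℕ) (θ : Fin (d + 1) → ℝ) (E : Fin (d + 1) → Matrix V V ℝ) : Prop where
  decomp : X.adjMatrix ℝ = ∑ r, θ r • E r
  sum_eq_one : ∑ r, E r = 1
  orth : ∀ r s, E r * E s = if r = s then E r else 0
  symm : ∀ r, (E r)ᵀ = E r
  strict_anti : ∀ r s : Fin (d + 1), r < s → θ s < θ r
  proj_ne_zero : ∀ r, E r ≠ 0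

open scoped Classical in
/-- The (index set of the) eigenvalue support of a vertex `u`:
those `r` with `E r * e_u ≠ 0`. -/
noncomputable def suppIdx [Fintype V] [DecidableEq V] {d : ℕ}
    (E : Fin (d + 1) → Matrix V V ℝ) (u : V) : Finset (Fin (d + 1)) :=
  Finset.univ.filter fun r => E r *ᵥ eVec u ≠ 0

/-- The dual degree `d*(u) = |Φ_u| - 1`. -/
noncomputable def dualDeg [Fintype V] [DecidableEq V] {d : ℕ}
    (E : Fin (d + 1) → Matrix V V ℝ) (u : V) : ℕ :=
  (suppIdx E u).card - 1

/-- A vertex is spectrally extremal if its eccentricity equals its dual degree. -/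
noncomputable def SpectrallyExtremal [Fintype V] [DecidableEq V] (X : SimpleGraph V) {d : ℕ}
    (E : Fin (d + 1) → Matrix V V ℝ) (u : V) : Prop :=
  ecc X u = dualDeg E u

/-- Vertices are cospectral if the diagonal entries of all spectral projections agree. -/
def Cospectral [Fintype V] [DecidableEq V] {d : ℕ}
    (E : Fin (d + 1) → Matrix V V ℝ) (u v : V) : Prop :=
  ∀ r, E r u u = E r v v

/-- Vertices are strongly cospectral if `E r e_u = ± E r e_v` for every `r`. -/
def StronglyCospectral [Fintype V] [DecidableEq V] {d : ℕ}
    (E : Fin (d + 1) → Matrix V V ℝ) (u v : V) : Prop :=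
  ∀ r, E r *ᵥ eVec v = E r *ᵥ eVec u ∨ E r *ᵥ eVec v = -(E r *ᵥ eVec u)

/-- `u` and `v` are antipodal vertices: they are cospectral, the distance partition of `u`
coincides with that of `v`, it is pseudo equitable (with respect to a positive Perron
eigenvector), and `{u}`, `{v}` are singleton classes at maximum distance from each other. -/
noncomputable def Antipodal [Fintype V] [DecidableEq V] (X : SimpleGraph V) [DecidableRel X.Adj]
    {d : ℕ} (θ : Fin (d + 1) → ℝ) (E : Fin (d + 1) → Matrix V V ℝ) (u v : V) : Prop :=
  Cospectral E u v ∧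
  -- the two distance partitions have the same classes
  (∀ i : ℕ, i ≤ ecc X u → ∃ j : ℕ, ∀ w, X.dist u w = i ↔ X.dist v w = j) ∧
  (∀ j : ℕ, j ≤ ecc X v → ∃ i : ℕ, ∀ w, X.dist u w = i ↔ X.dist v w = j) ∧
  -- `{u}` and `{v}` are singletons at maximum distance from each other
  X.dist u v = ecc X u ∧ X.dist u v = ecc X v ∧
  (∀ w, X.dist u w = X.dist u v → w = v) ∧
  (∀ w, X.dist v w = X.dist u v → w = u) ∧
  -- the partition is pseudo equitable with respect to a positive eigenvector
  -- for the largest eigenvalue `θ 0`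
  ∃ x : V → ℝ, (∀ w, 0 < x w) ∧ X.adjMatrix ℝ *ᵥ x = θ 0 • x ∧
    ∀ i : ℕ, ∀ w₁ w₂ : V, X.dist u w₁ = X.dist u w₂ →
      ∑ c ∈ Finset.univ.filter (fun c => X.dist u c = i),
          (X.adjMatrix ℝ) w₁ c * x c / x w₁
        = ∑ c ∈ Finset.univ.filter (fun c => X.dist u c = i),
          (X.adjMatrix ℝ) w₂ c * x c / x w₂

/-- Perfect state transfer from `u` to `v` at time `t`:
`|(exp (i t A))_{v,u}| = 1`. -/
noncomputable def PST [Fintype V] [DecidableEq V] (X : SimpleGraph V) [DecidableRel X.Adj]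
    (u v : V) (t : ℝ) : Prop :=
  ‖(NormedSpace.exp ((Complex.I * (t : ℂ)) • X.adjMatrix ℂ)) v u‖ = 1

/-- `X` is distance-regular: there are intersection numbers `a i`, `b i`, `c i` such that
any vertex `w` at distance `i` from `u` has exactly `c i` neighbours at distance `i - 1`
from `u`, `a i` neighbours at distance `i`, and `b i` neighbours at distance `i + 1`. -/
noncomputable def IsDistanceRegular [Fintype V] (X : SimpleGraph V) [DecidableRel X.Adj] :
    Prop :=
  ∃ a b c : ℕ → ℕ, ∀ (i : ℕ) (u w : V), X.dist u w = i →
    (Finset.univ.filter (fun z => X.Adj w z ∧ X.dist u z + 1 = i)).card = c i ∧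
    (Finset.univ.filter (fun z => X.Adj w z ∧ X.dist u z = i)).card = a i ∧
    (Finset.univ.filter (fun z => X.Adj w z ∧ X.dist u z = i + 1)).card = b i

variable [Fintype V] [DecidableEq V]

/-!
Put `p = ∏_{r ∈ Φ_u} (X - θ_r)`. Since `p(A) = ∑_r p(θ_r) E_r`, the column `p(A) e_u` vanishes,
and so does that of `X^j p` for every `j`. On the other hand, if `k = d(w, u)` then
`(A^i)_{wu} = 0` for `i < k` while `(A^k)_{wu}`, the number of shortest walks, is positive; so the
`(w, u)` entry of a polynomial of degree `k` in `A` is its leading coefficient times `(A^k)_{wu}`.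
Taking `X^j p` of degree `k` shows `k < deg p = |Φ_u|`.
-/

namespace CompleteOrthogonalIdempotents

variable {R S ι : Type*} [CommSemiring R] [Semiring S] [Algebra R S] [Fintype ι]
  {e : ι → S}

theorem sum_smul_pow (he : CompleteOrthogonalIdempotents e) (θ : ι → R) (n : ℕ) :
    (∑ i, θ i • e i) ^ n = ∑ i, θ i ^ n • e i := by
  induction n with
  | zero => simpa using he.complete.symm
  | succ n ih =>
    rw [pow_succ, ih, Finset.sum_mul_sum]
    refine Finset.sum_congr rfl fun i _ => ?_
    rw [Finset.sum_eq_single i (fun j _ hji => by rw [smul_mul_smul, he.ortho hji.symm, smul_zero])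
      (by simp), smul_mul_smul, (he.idem i).eq, pow_succ]

theorem aeval_sum_smul (he : CompleteOrthogonalIdempotents e) (θ : ι → R) (p : R[X]) :
    aeval (∑ i, θ i • e i) p = ∑ i, p.eval (θ i) • e i := by
  simp only [aeval_eq_sum_range, he.sum_smul_pow, Finset.smul_sum, smul_smul, eval_eq_sum_range,
    Finset.sum_smul]
  exact Finset.sum_comm

end CompleteOrthogonalIdempotents

namespace SimpleGraph

variable {R : Type*} (G : SimpleGraph V) [DecidableRel G.Adj]

theorem adjMatrix_pow_apply_eq_zero_of_lt_dist [Semiring R] {n : ℕ} {u v : V}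
    (h : n < G.dist u v) : (G.adjMatrix R ^ n) u v = 0 := by
  rw [adjMatrix_pow_apply_eq_card_walk,
    Fintype.card_eq_zero_iff.2 ⟨fun ⟨p, hp⟩ => (hp ▸ G.dist_le p).not_gt h⟩, Nat.cast_zero]

theorem adjMatrix_pow_dist_apply_ne_zero [Semiring R] [CharZero R] {u v : V}
    (h : G.Reachable u v) : (G.adjMatrix R ^ G.dist u v) u v ≠ 0 := by
  obtain ⟨p, hp⟩ := h.exists_walk_length_eq_dist
  rw [adjMatrix_pow_apply_eq_card_walk, Nat.cast_ne_zero]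
  exact (Fintype.card_pos_iff.2 ⟨⟨p, hp⟩⟩).ne'

theorem aeval_adjMatrix_apply_of_natDegree_le_dist [CommSemiring R] {p : R[X]} {u v : V}
    (h : p.natDegree ≤ G.dist u v) :
    aeval (G.adjMatrix R) p u v = p.coeff (G.dist u v) * (G.adjMatrix R ^ G.dist u v) u v := by
  rw [aeval_eq_sum_range' (Nat.lt_succ_of_le h), Matrix.sum_apply, Finset.sum_range_succ,
    Finset.sum_eq_zero fun i hi => ?_, zero_add, Matrix.smul_apply, smul_eq_mul]
  rw [Matrix.smul_apply, G.adjMatrix_pow_apply_eq_zero_of_lt_dist (Finset.mem_range.1 hi),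
    smul_zero]

theorem dist_lt_natDegree_of_aeval_apply_eq_zero [CommRing R] [IsDomain R] [CharZero R]
    {p : R[X]} (hp : p ≠ 0) {u v : V} (huv : G.Reachable u v)
    (h : ∀ w, aeval (G.adjMatrix R) p w v = 0) : G.dist u v < p.natDegree := by
  by_contra! hle
  obtain ⟨j, hj⟩ := Nat.exists_eq_add_of_le hle
  have hdeg : (X ^ j * p).natDegree = G.dist u v := by rw [natDegree_X_pow_mul j hp, hj]
  have hcoeff : (X ^ j * p).coeff (G.dist u v) = p.leadingCoeff := by
    rw [hj, coeff_X_pow_mul]; rfl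
  have hzero : aeval (G.adjMatrix R) (X ^ j * p) u v = 0 := by
    simp [Matrix.mul_apply, h]
  rw [G.aeval_adjMatrix_apply_of_natDegree_le_dist hdeg.le, hcoeff] at hzero
  exact mul_ne_zero (leadingCoeff_ne_zero.2 hp) (G.adjMatrix_pow_dist_apply_ne_zero huv) hzero

end SimpleGraph

namespace SpectralDecomp

variable {X : SimpleGraph V} [DecidableRel X.Adj] {d : ℕ} {θ : Fin (d + 1) → ℝ}
  {E : Fin (d + 1) → Matrix V V ℝ}

theorem completeOrthogonalIdempotents (hspec : SpectralDecomp X d θ E) :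
    CompleteOrthogonalIdempotents E where
  idem r := by simpa [IsIdempotentElem] using hspec.orth r r
  ortho r s hrs := by simpa [hrs] using hspec.orth r s
  complete := hspec.sum_eq_one

theorem aeval_adjMatrix (hspec : SpectralDecomp X d θ E) (p : ℝ[X]) :
    aeval (X.adjMatrix ℝ) p = ∑ r, p.eval (θ r) • E r := by
  rw [hspec.decomp]
  exact hspec.completeOrthogonalIdempotents.aeval_sum_smul θ p

theorem aeval_adjMatrix_apply_eq_zero_of_isRoot (hspec : SpectralDecomp X d θ E) {p : ℝ[X]}
    {u : V} (hp : ∀ r ∈ suppIdx E u, p.IsRoot (θ r)) (w : V) : aeval (X.adjMatrix ℝ) p w u = 0 := by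
  rw [hspec.aeval_adjMatrix, Matrix.sum_apply]
  refine Finset.sum_eq_zero fun r _ => ?_
  by_cases hr : r ∈ suppIdx E u
  · simp [(hp r hr).eq_zero]
  · have hcol : E r *ᵥ eVec u = 0 := by simpa [suppIdx] using hr
    have hentry : E r w u = 0 := by simpa [eVec] using congrFun hcol w
    simp [hentry]

theorem dist_lt_card_suppIdx (hspec : SpectralDecomp X d θ E) {u w : V} (h : X.Reachable w u) :
    X.dist w u < (suppIdx E u).card := by
  have hroot : ∀ r ∈ suppIdx E u, (∏ s ∈ suppIdx E u, (Polynomial.X - C (θ s))).IsRoot (θ r) :=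
    fun r hr => by simpa [eval_prod, Finset.prod_eq_zero_iff, sub_eq_zero] using ⟨r, hr, rfl⟩
  simpa using X.dist_lt_natDegree_of_aeval_apply_eq_zero (monic_prod_X_sub_C θ _).ne_zero h
    (hspec.aeval_adjMatrix_apply_eq_zero_of_isRoot hroot)

end SpectralDecomp

/-- For every vertex `u` of a connected finite simple graph,
the eccentricity of `u` is at most the dual degree of `u`: `ε_u ≤ |Φ_u| - 1`. -/
theorem stmt_0 (X : SimpleGraph V) [DecidableRel X.Adj] (hconn : X.Connected)
    {d : ℕ} (θ : Fin (d + 1) → ℝ) (E : Fin (d + 1) → Matrix V V ℝ)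
    (hspec : SpectralDecomp X d θ E) (u : V) :
    ecc X u ≤ (suppIdx E u).card - 1 :=
  Finset.sup_le fun w _ =>
    Nat.le_sub_one_of_lt (X.dist_comm (u := u) ▸ hspec.dist_lt_card_suppIdx (hconn w u))
end

section
/- Let u be a spectrally extremal vertex of X, and suppose u and v are strongly cospectral, so that for each θ_r ∈ Φ_u there is a sign σ_r ∈ {+1,−1} with E_r e_v = σ_r E_r e_u. Let p(x) be the polynomial of minimum degree satisfying p(θ_r) = σ_r for all θ_r ∈ Φ_u. Then p(A) e_u = e_v and the degree of p equals d(u,v). -/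
open Matrix Finset Polynomial

variable {V : Type*}

variable [Fintype V] [DecidableEq V]

/-!
Writing `e_u = ∑ r, E r e_u` and using that `E r e_u` is a `θ r`-eigenvector of `A`, we get
`p(A) e_u = ∑ r, σ r • E r e_u = ∑ r, E r e_v = e_v`. On the combinatorial side, `(A ^ j) w u`
vanishes for `j < d(u,w)` and is positive for `j = d(u,w)`, so `p(A) e_u` vanishes outside the
ball of radius `deg p` around `u` and is nonzero at every vertex of the sphere of that radius.
Lagrange interpolation gives `deg p ≤ |Φ_u| - 1 = ε_u`, so this sphere is nonempty; since
`p(A) e_u = e_v`, it must be `{v}`.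
-/

namespace Matrix

variable {n R : Type*} [Fintype n] [DecidableEq n] [CommRing R]

theorem pow_mulVec_of_mulVec_eq_smul {A : Matrix n n R} {x : n → R} {μ : R}
    (h : A *ᵥ x = μ • x) (k : ℕ) : (A ^ k) *ᵥ x = μ ^ k • x := by
  induction k with
  | zero => simp
  | succ k ih => rw [pow_succ, ← mulVec_mulVec, h, mulVec_smul, ih, smul_smul, pow_succ']

theorem aeval_mulVec_of_mulVec_eq_smul {A : Matrix n n R} {x : n → R} {μ : R}
    (h : A *ᵥ x = μ • x) (p : R[X]) : aeval A p *ᵥ x = p.eval μ • x := by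
  induction p using Polynomial.induction_on' with
  | add p q hp hq => rw [map_add, add_mulVec, hp, hq, eval_add, add_smul]
  | monomial k a =>
    rw [aeval_monomial, ← Algebra.smul_def, smul_mulVec, pow_mulVec_of_mulVec_eq_smul h,
      smul_smul, eval_monomial]

end Matrix

theorem aeval_mulVec_eVec_apply (A : Matrix V V ℝ) (p : ℝ[X]) (u w : V) :
    (aeval A p *ᵥ eVec u) w = ∑ j ∈ range (p.natDegree + 1), p.coeff j * (A ^ j) w u := by
  simp [eVec, aeval_eq_sum_range, Matrix.sum_apply]

theorem ne_zero_of_aeval_mulVec_eVec_eq {A : Matrix V V ℝ} {p : ℝ[X]} {u v : V}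
    (h : aeval A p *ᵥ eVec u = eVec v) : p ≠ 0 := by
  rintro rfl
  simpa [eVec] using congrFun h v

theorem Polynomial.degree_lt_card_of_forall_degree_le_interpolant {F ι : Type*} [Field F]
    [DecidableEq ι] {s : Finset ι} {x y : ι → F} (hx : Set.InjOn x s) {p : F[X]}
    (hmin : ∀ q : F[X], (∀ i ∈ s, q.eval (x i) = y i) → p.degree ≤ q.degree) :
    p.degree < #s :=
  (hmin _ fun _ hi => Lagrange.eval_interpolate_at_node y hx hi).trans_lt
    (Lagrange.degree_interpolate_lt y hx)

namespace SpectralDecomp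

variable {X : SimpleGraph V} [DecidableRel X.Adj] {d : ℕ} {θ : Fin (d + 1) → ℝ}
  {E : Fin (d + 1) → Matrix V V ℝ}

theorem adjMatrix_mul_proj (h : SpectralDecomp X d θ E) (r : Fin (d + 1)) :
    X.adjMatrix ℝ * E r = θ r • E r := by
  simp [h.decomp, Finset.sum_mul, h.orth]

theorem adjMatrix_mulVec_proj_mulVec (h : SpectralDecomp X d θ E) (r : Fin (d + 1))
    (x : V → ℝ) : X.adjMatrix ℝ *ᵥ (E r *ᵥ x) = θ r • (E r *ᵥ x) := by
  rw [Matrix.mulVec_mulVec, h.adjMatrix_mul_proj, Matrix.smul_mulVec]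

theorem sum_proj_mulVec (h : SpectralDecomp X d θ E) (x : V → ℝ) : ∑ r, E r *ᵥ x = x := by
  rw [← Matrix.sum_mulVec, h.sum_eq_one, Matrix.one_mulVec]

theorem aeval_mulVec_eVec_eq (h : SpectralDecomp X d θ E) {u v : V} {σ : Fin (d + 1) → ℝ}
    (hσ : ∀ r, E r *ᵥ eVec v = σ r • (E r *ᵥ eVec u)) {p : ℝ[X]}
    (hp : ∀ r ∈ suppIdx E u, p.eval (θ r) = σ r) :
    aeval (X.adjMatrix ℝ) p *ᵥ eVec u = eVec v := by
  have hterm (r : Fin (d + 1)) :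
      aeval (X.adjMatrix ℝ) p *ᵥ (E r *ᵥ eVec u) = E r *ᵥ eVec v := by
    rw [Matrix.aeval_mulVec_of_mulVec_eq_smul (h.adjMatrix_mulVec_proj_mulVec r _), hσ]
    by_cases hr : r ∈ suppIdx E u
    · rw [hp r hr]
    · have hzero : E r *ᵥ eVec u = 0 := by simpa [suppIdx] using hr
      simp [hzero]
  calc aeval (X.adjMatrix ℝ) p *ᵥ eVec u
      = ∑ r, aeval (X.adjMatrix ℝ) p *ᵥ (E r *ᵥ eVec u) := by
        rw [← Matrix.mulVec_sum, h.sum_proj_mulVec]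
    _ = ∑ r, E r *ᵥ eVec v := Finset.sum_congr rfl fun r _ => hterm r
    _ = eVec v := h.sum_proj_mulVec _

end SpectralDecomp

namespace SimpleGraph

theorem Connected.exists_dist_eq_of_le {W : Type*} {G : SimpleGraph W} (hconn : G.Connected)
    {u w : W} {k : ℕ} (hk : k ≤ G.dist u w) : ∃ z, G.dist u z = k := by
  obtain ⟨q, hq⟩ := hconn.exists_walk_length_eq_dist u w
  refine ⟨q.getVert k, le_antisymm ?_ ?_⟩
  · simpa [Walk.take_length, hq, hk] using G.dist_le (q.take k)
  · have htri := hconn.dist_triangle (u := u) (v := q.getVert k) (w := w)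
    have hdrop := G.dist_le (q.drop k)
    rw [Walk.drop_length, hq] at hdrop
    omega

theorem Connected.exists_dist_eq_of_le_ecc {W : Type*} [Fintype W] {G : SimpleGraph W}
    (hconn : G.Connected) {u : W} {k : ℕ} (hk : k ≤ ecc G u) : ∃ w, G.dist u w = k := by
  have : Nonempty W := hconn.nonempty
  obtain ⟨w, -, hw⟩ := Finset.exists_mem_eq_sup univ univ_nonempty (G.dist u)
  exact hconn.exists_dist_eq_of_le (w := w) (hw ▸ hk)

variable {X : SimpleGraph V} [DecidableRel X.Adj]

theorem adjMatrix_pow_apply_eq_zero_of_lt_dist_s4 {R : Type*} [Semiring R] {u w : V} {j : ℕ}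
    (h : j < X.dist u w) : (X.adjMatrix R ^ j) u w = 0 := by
  rw [adjMatrix_pow_apply_eq_card_walk, Fintype.card_eq_zero_iff.2, Nat.cast_zero]
  exact ⟨fun ⟨q, hq⟩ => (X.dist_le q).not_gt (hq.symm ▸ h)⟩

theorem Reachable.adjMatrix_pow_dist_apply_pos {R : Type*} [Semiring R] [PartialOrder R]
    [IsOrderedRing R] [Nontrivial R] {u w : V} (hr : X.Reachable u w) :
    0 < (X.adjMatrix R ^ X.dist u w) u w := by
  obtain ⟨q, hq⟩ := hr.exists_walk_length_eq_dist
  rw [adjMatrix_pow_apply_eq_card_walk, Nat.cast_pos]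
  exact Fintype.card_pos_iff.2 ⟨⟨q, hq⟩⟩

theorem aeval_adjMatrix_mulVec_eVec_apply_eq_zero {p : ℝ[X]} {u w : V}
    (h : p.natDegree < X.dist u w) : (aeval (X.adjMatrix ℝ) p *ᵥ eVec u) w = 0 := by
  rw [aeval_mulVec_eVec_apply]
  refine Finset.sum_eq_zero fun j hj => ?_
  rw [adjMatrix_pow_apply_eq_zero_of_lt_dist_s4 (by rw [dist_comm]; simp at hj; omega), mul_zero]

theorem aeval_adjMatrix_mulVec_eVec_apply_ne_zero {p : ℝ[X]} (hp0 : p ≠ 0) {u w : V}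
    (hr : X.Reachable u w) (h : p.natDegree = X.dist u w) :
    (aeval (X.adjMatrix ℝ) p *ᵥ eVec u) w ≠ 0 := by
  have hlow : ∑ j ∈ range p.natDegree, p.coeff j * (X.adjMatrix ℝ ^ j) w u = 0 :=
    Finset.sum_eq_zero fun j hj => by
      rw [adjMatrix_pow_apply_eq_zero_of_lt_dist_s4 (by rw [dist_comm]; simp at hj; omega), mul_zero]
  have hpos : 0 < (X.adjMatrix ℝ ^ p.natDegree) w u := by
    rw [h, dist_comm]
    exact hr.symm.adjMatrix_pow_dist_apply_pos
  rw [aeval_mulVec_eVec_apply, sum_range_succ, hlow, zero_add]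
  exact mul_ne_zero (leadingCoeff_ne_zero.2 hp0) hpos.ne'

theorem Connected.natDegree_eq_dist_of_aeval_mulVec_eVec_eq (hconn : X.Connected) {p : ℝ[X]}
    {u v : V} (h : aeval (X.adjMatrix ℝ) p *ᵥ eVec u = eVec v) (hdeg : p.natDegree ≤ ecc X u) :
    p.natDegree = X.dist u v := by
  refine le_antisymm (not_lt.1 fun hlt => ?_) (not_lt.1 fun hlt => ?_)
  · obtain ⟨w, hw⟩ := hconn.exists_dist_eq_of_le_ecc hdeg
    have hwv : w ≠ v := by rintro rfl; omega
    apply aeval_adjMatrix_mulVec_eVec_apply_ne_zero (ne_zero_of_aeval_mulVec_eVec_eq h)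
      (hconn u w) hw.symm
    rw [h]
    simp [eVec, hwv]
  · have hzero := aeval_adjMatrix_mulVec_eVec_apply_eq_zero hlt
    rw [h] at hzero
    simp [eVec] at hzero

end SimpleGraph

theorem stmt_4_general (X : SimpleGraph V) [DecidableRel X.Adj] (hconn : X.Connected)
    {d : ℕ} (θ : Fin (d + 1) → ℝ) (E : Fin (d + 1) → Matrix V V ℝ)
    (hspec : SpectralDecomp X d θ E) (u v : V)
    (hext : SpectrallyExtremal X E u)
    (σ : Fin (d + 1) → ℝ)
    (hσ : ∀ r, E r *ᵥ eVec v = σ r • (E r *ᵥ eVec u))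
    (p : Polynomial ℝ)
    (hp : ∀ r ∈ suppIdx E u, p.eval (θ r) = σ r)
    (hmin : ∀ q : Polynomial ℝ, (∀ r ∈ suppIdx E u, q.eval (θ r) = σ r) →
      p.degree ≤ q.degree) :
    (aeval (X.adjMatrix ℝ) p) *ᵥ eVec u = eVec v ∧ p.natDegree = X.dist u v := by
  have htransfer := hspec.aeval_mulVec_eVec_eq hσ hp
  have hdeg : p.natDegree < #(suppIdx E u) :=
    (natDegree_lt_iff_degree_lt (ne_zero_of_aeval_mulVec_eVec_eq htransfer)).2
      (degree_lt_card_of_forall_degree_le_interpolant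
        (StrictAnti.injective hspec.strict_anti).injOn hmin)
  refine ⟨htransfer, hconn.natDegree_eq_dist_of_aeval_mulVec_eVec_eq htransfer ?_⟩
  rw [hext, dualDeg]
  omega

/-- If `u` is spectrally extremal, `u, v` are strongly cospectral with
signs `σ_r`, and `p` is the minimum-degree polynomial with `p(θ_r) = σ_r` on `Φ_u`,
then `p(A) e_u = e_v` and `deg p = d(u,v)`. -/
theorem stmt_4 (X : SimpleGraph V) [DecidableRel X.Adj] (hconn : X.Connected)
    {d : ℕ} (θ : Fin (d + 1) → ℝ) (E : Fin (d + 1) → Matrix V V ℝ)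
    (hspec : SpectralDecomp X d θ E) (u v : V)
    (hext : SpectrallyExtremal X E u)
    (σ : Fin (d + 1) → ℝ) (hσval : ∀ r, σ r = 1 ∨ σ r = -1)
    (hσ : ∀ r, E r *ᵥ eVec v = σ r • (E r *ᵥ eVec u))
    (p : Polynomial ℝ)
    (hp : ∀ r ∈ suppIdx E u, p.eval (θ r) = σ r)
    (hmin : ∀ q : Polynomial ℝ, (∀ r ∈ suppIdx E u, q.eval (θ r) = σ r) →
      p.degree ≤ q.degree) :
    (aeval (X.adjMatrix ℝ) p) *ᵥ eVec u = eVec v ∧ p.natDegree = X.dist u v :=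
  stmt_4_general X hconn θ E hspec u v hext σ hσ p hp hmin
end

section
/- Suppose u is a spectrally extremal vertex of X, u and v are strongly cospectral, and p(x) is the polynomial of degree g = d(u,v) satisfying p(A) e_u = e_v and p(θ_r) ∈ {+1,−1} for all θ_r ∈ Φ_u. Let X' be the connected component of X \ v containing u and let A' be its adjacency matrix. Then p(A') e_u = 0, and every nonzero polynomial q with q(A') e_u = 0 has degree at least g; that is, up to a nonzero constant, p is the minimal polynomial of A' relative to e_u. -/
open Matrix Finset Polynomial

variable {V : Type*}

variable [Fintype V] [DecidableEq V]

/-! For `k < d(u,v)` every walk of length `k` from `u` avoids `v`, so it stays in the component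
`X'`; hence `A^k e_u` is supported on `X'` and, for `k ≤ d(u,v)`, the restriction of `A^k e_u` to
`X'` is `A'^k e_u`. Restricting `p(A) e_u = e_v` gives `p(A') e_u = 0`. Conversely, if
`q(A') e_u = 0` with `deg q < d(u,v)`, then `q(A) e_u = 0`, so `q` vanishes on the eigenvalue
support `Φ_u` and `deg q ≥ |Φ_u| = d*(u) + 1 = ε_u + 1 > d(u,v)`. -/

theorem mul_aeval_eq_eval_smul {R A : Type*} [CommSemiring R] [Semiring A] [Algebra R A]
    {e a : A} {c : R} (h : e * a = c • e) (q : R[X]) : e * aeval a q = q.eval c • e := by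
  induction q using Polynomial.induction_on with
  | C b => simp [Algebra.algebraMap_eq_smul_one]
  | add p q hp hq => simp [mul_add, hp, hq, add_smul]
  | monomial n b ih =>
    have hstep : aeval a (C b * X ^ (n + 1)) = aeval a (C b * X ^ n) * a := by
      simp [pow_succ, mul_assoc]
    rw [hstep, ← mul_assoc, ih, smul_mul_assoc, h, smul_smul]
    simp [pow_succ, mul_assoc]

theorem eVec_comp_subtype_val {α : Type*} [DecidableEq α] {s : Set α} (u : s) :
    eVec (u : α) ∘ Subtype.val = eVec u := by
  ext w
  simp [eVec, Pi.single_apply, Subtype.ext_iff]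

theorem aeval_mulVec_apply (M : Matrix V V ℝ) (q : ℝ[X]) (x : V → ℝ) (w : V) :
    (aeval M q *ᵥ x) w = ∑ j ∈ range (q.natDegree + 1), q.coeff j * (M ^ j *ᵥ x) w := by
  simp [aeval_eq_sum_range, sum_mulVec, smul_mulVec, Finset.sum_apply]

theorem aeval_mulVec_eq_zero_of_notMem (S : Finset V) {M : Matrix V V ℝ} {q : ℝ[X]}
    {x : V → ℝ} (hx : ∀ j ≤ q.natDegree, ∀ w ∉ S, (M ^ j *ᵥ x) w = 0) {w : V} (hw : w ∉ S) :
    (aeval M q *ᵥ x) w = 0 := by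
  rw [aeval_mulVec_apply]
  exact sum_eq_zero fun j hj => by rw [hx j (Nat.lt_succ_iff.1 (mem_range.1 hj)) w hw, mul_zero]

namespace SpectralDecomp

variable {X : SimpleGraph V} [DecidableRel X.Adj] {d : ℕ} {θ : Fin (d + 1) → ℝ}
  {E : Fin (d + 1) → Matrix V V ℝ}

theorem proj_mul_adjMatrix (hspec : SpectralDecomp X d θ E) (r : Fin (d + 1)) :
    E r * X.adjMatrix ℝ = θ r • E r := by
  simp [hspec.decomp, Finset.mul_sum, hspec.orth]

theorem eval_eq_zero_of_aeval_mulVec_eq_zero (hspec : SpectralDecomp X d θ E) {q : ℝ[X]}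
    {x : V → ℝ} (hq : aeval (X.adjMatrix ℝ) q *ᵥ x = 0) {r : Fin (d + 1)} (hr : E r *ᵥ x ≠ 0) :
    q.eval (θ r) = 0 := by
  have h := congrArg (E r *ᵥ ·) hq
  simp only [mulVec_mulVec, mul_aeval_eq_eval_smul (hspec.proj_mul_adjMatrix r), smul_mulVec,
    mulVec_zero] at h
  exact (smul_eq_zero.1 h).resolve_right hr

theorem card_suppIdx_le_natDegree (hspec : SpectralDecomp X d θ E) {q : ℝ[X]} (hq : q ≠ 0)
    {u : V} (hqu : aeval (X.adjMatrix ℝ) q *ᵥ eVec u = 0) : (suppIdx E u).card ≤ q.natDegree := by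
  have hinj : Function.Injective θ := StrictAnti.injective fun r s h => hspec.strict_anti r s h
  rw [← card_image_of_injective _ hinj]
  refine card_le_degree_of_subset_roots fun t ht => ?_
  obtain ⟨r, hr, rfl⟩ := mem_image.1 (mem_def.2 ht)
  exact (mem_roots hq).2 <|
    hspec.eval_eq_zero_of_aeval_mulVec_eq_zero hqu (by simpa [suppIdx] using hr)

end SpectralDecomp

namespace SimpleGraph

theorem Walk.notMem_support_of_length_lt_dist {W : Type*} [DecidableEq W] {G : SimpleGraph W}
    {u v w : W} (p : G.Walk u w) (hp : p.length < G.dist u v) : v ∉ p.support := fun hv =>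
  ((dist_le (p.takeUntil v hv)).trans (p.length_takeUntil_le_length hv)).not_gt hp

theorem induce_adjMatrix_mulVec_comp_val {W : Type*} [Fintype W] (G : SimpleGraph W)
    [DecidableRel G.Adj] (S : Finset W) {x : W → ℝ} (hx : ∀ w ∉ S, x w = 0) :
    (G.induce (↑S : Set W)).adjMatrix ℝ *ᵥ (x ∘ Subtype.val) =
      (G.adjMatrix ℝ *ᵥ x) ∘ Subtype.val := by
  ext w
  simp only [mulVec, dotProduct, adjMatrix_apply, comap_adj, Function.Embedding.coe_subtype,
    Function.comp_apply]
  exact (Finset.sum_coe_sort S fun z => (if G.Adj w z then (1 : ℝ) else 0) * x z).trans <|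
    Finset.sum_subset (subset_univ S) fun z _ hz => by simp [hx z hz]

variable (G : SimpleGraph V) [DecidableRel G.Adj]

theorem exists_walk_of_adjMatrix_pow_mulVec_eVec_ne_zero {k : ℕ} {u w : V}
    (h : (G.adjMatrix ℝ ^ k *ᵥ eVec u) w ≠ 0) : ∃ p : G.Walk u w, p.length = k := by
  rw [eVec, mulVec_single_one, col_apply, adjMatrix_pow_apply_eq_card_walk] at h
  obtain ⟨⟨p, hp⟩⟩ := Fintype.card_pos_iff.1 (Nat.pos_of_ne_zero (by exact_mod_cast h))
  exact ⟨p.reverse, by simpa using hp⟩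

theorem adjMatrix_pow_mulVec_eVec_eq_zero_of_notMem {S : Finset V} {u v : V}
    (hS : ∀ w (q : G.Walk u w), v ∉ q.support → w ∈ S) {k : ℕ} (hk : k < G.dist u v) {w : V}
    (hw : w ∉ S) : (G.adjMatrix ℝ ^ k *ᵥ eVec u) w = 0 := by
  by_contra h
  obtain ⟨p, rfl⟩ := G.exists_walk_of_adjMatrix_pow_mulVec_eVec_ne_zero h
  exact hw (hS w p (p.notMem_support_of_length_lt_dist hk))

variable (S : Finset V)

theorem induce_adjMatrix_pow_mulVec_comp_val {x : V → ℝ} {k : ℕ}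
    (hx : ∀ j < k, ∀ w ∉ S, (G.adjMatrix ℝ ^ j *ᵥ x) w = 0) :
    (G.induce (↑S : Set V)).adjMatrix ℝ ^ k *ᵥ (x ∘ Subtype.val) =
      (G.adjMatrix ℝ ^ k *ᵥ x) ∘ Subtype.val := by
  induction k with
  | zero => simp
  | succ k ih =>
    rw [pow_succ', ← mulVec_mulVec, ih fun j hj => hx j (by omega),
      G.induce_adjMatrix_mulVec_comp_val S (hx k k.lt_succ_self), mulVec_mulVec, ← pow_succ']

theorem induce_aeval_mulVec_comp_val {x : V → ℝ} {k : ℕ}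
    (hx : ∀ j < k, ∀ w ∉ S, (G.adjMatrix ℝ ^ j *ᵥ x) w = 0) {q : ℝ[X]} (hq : q.natDegree ≤ k) :
    aeval ((G.induce (↑S : Set V)).adjMatrix ℝ) q *ᵥ (x ∘ Subtype.val) =
      (aeval (G.adjMatrix ℝ) q *ᵥ x) ∘ Subtype.val := by
  ext w
  simp only [aeval_mulVec_apply, Function.comp_apply]
  refine sum_congr rfl fun j hj => ?_
  have hjk : j ≤ k := by have := mem_range.1 hj; omega
  rw [G.induce_adjMatrix_pow_mulVec_comp_val S fun i hi => hx i (by omega), Function.comp_apply]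

end SimpleGraph

/-- With `u` spectrally extremal, `u, v` strongly cospectral and `p` the
degree-`d(u,v)` polynomial with `p(A) e_u = e_v` and `p(θ_r) = ±1` on `Φ_u`: if `X'` is the
connected component of `X \ v` containing `u` (with vertex set `S`) and `A'` its adjacency
matrix, then `p(A') e_u = 0` and every nonzero `q` with `q(A') e_u = 0` has degree at least
`d(u,v)`; i.e. `p` is, up to a constant, the minimal polynomial of `A'` relative to `e_u`. -/
theorem stmt_10 (X : SimpleGraph V) [DecidableRel X.Adj]
    {d : ℕ} (θ : Fin (d + 1) → ℝ) (E : Fin (d + 1) → Matrix V V ℝ)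
    (hspec : SpectralDecomp X d θ E) (u v : V)
    (hext : SpectrallyExtremal X E u)
    (p : Polynomial ℝ) (hdeg : p.natDegree = X.dist u v)
    (hpA : (aeval (X.adjMatrix ℝ) p) *ᵥ eVec u = eVec v)
    (S : Finset V)
    (hS : ∀ w : V, w ∈ S ↔ ∃ q : X.Walk u w, v ∉ q.support)
    (hu : u ∈ S) :
    (aeval ((X.induce (↑S : Set V)).adjMatrix ℝ) p) *ᵥ
        eVec (⟨u, by simpa using hu⟩ : (↑S : Set V)) = 0 ∧
      ∀ q : Polynomial ℝ, q ≠ 0 →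
        (aeval ((X.induce (↑S : Set V)).adjMatrix ℝ) q) *ᵥ
            eVec (⟨u, by simpa using hu⟩ : (↑S : Set V)) = 0 →
        X.dist u v ≤ q.natDegree := by
  have hvS : v ∉ S := fun hv => by
    obtain ⟨q, hq⟩ := (hS v).1 hv
    exact hq q.end_mem_support
  have hsupp : ∀ j < X.dist u v, ∀ w ∉ S, (X.adjMatrix ℝ ^ j *ᵥ eVec u) w = 0 := fun j hj w hw =>
    X.adjMatrix_pow_mulVec_eVec_eq_zero_of_notMem (fun w q hq => (hS w).2 ⟨q, hq⟩) hj hw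
  have hrestrict : ∀ q : ℝ[X], q.natDegree ≤ X.dist u v →
      aeval ((X.induce (↑S : Set V)).adjMatrix ℝ) q *ᵥ eVec (⟨u, by simpa using hu⟩ : (↑S : Set V))
        = (aeval (X.adjMatrix ℝ) q *ᵥ eVec u) ∘ Subtype.val := fun q hq => by
    rw [← eVec_comp_subtype_val, X.induce_aeval_mulVec_comp_val S hsupp hq]
  refine ⟨?_, fun q hq0 hq => ?_⟩
  · rw [hrestrict p hdeg.le, hpA]
    ext w
    exact Pi.single_eq_of_ne (ne_of_mem_of_not_mem (mem_coe.1 w.2) hvS) _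
  · by_contra! hlt
    have hqA : aeval (X.adjMatrix ℝ) q *ᵥ eVec u = 0 := by
      ext w
      by_cases hw : w ∈ S
      · simpa using congrFun ((hrestrict q hlt.le).symm.trans hq) ⟨w, hw⟩
      · exact aeval_mulVec_eq_zero_of_notMem S (fun j hj => hsupp j (by omega)) hw
    refine hlt.not_ge ?_
    calc X.dist u v ≤ ecc X u := le_sup (mem_univ v)
      _ = dualDeg E u := hext
      _ ≤ (suppIdx E u).card := Nat.sub_le _ _
      _ ≤ q.natDegree := hspec.card_suppIdx_le_natDegree hq0 hqA
end
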